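/- Let H be a real Hilbert space, K ⊆ H closed convex nonempty, x ∈ K, g ∈ H with ⟨g, y − x⟩ ≤ 0 for all y ∈ K (i.e., g in the normal cone). Suppose K is extended polyhedric at x for g, i.e., the closure of { z ∈ T_K(x) : 0 ∈ T²_K(x,z) } ∩ g^⊥ equals T_K(x) ∩ g^⊥. Then the second subderivative Q of the indicator function δ_K at x for g satisfies Q(z) = 0 for all z in { z ∈ T_K(x) : 0 ∈ T²_K(x,z) } ∩ g^⊥, and the domain of Q contains this set. -/

import Mathlib

open Filter Topology
open scoped RealInnerProductSpace Classical

variable {H : Type*} [NormedAddCommGroup H] [InnerProductSpace ℝ H] [CompleteSpace H]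

/-- Second-order difference quotient of `j` at `x` for `g` with step `t` and direction `w`. -/
noncomputable def secondQuotH (j : H → EReal) (x g : H) (t : ℝ) (w : H) : EReal :=
  ((2 / t ^ 2 : ℝ) : EReal) * (j (x + t • w) - j x - ((t * ⟪g, w⟫ : ℝ) : EReal))

/-- Weak convergence of a sequence in the Hilbert space `H`. -/
def WeakTendstoH (z : ℕ → H) (z₀ : H) : Prop :=
  ∀ w : H, Tendsto (fun n => ⟪z n, w⟫) atTop (nhds ⟪z₀, w⟫)

/-- The weak second subderivative of `j` at `x` for `g`. -/
noncomputable def QsubH (j : H → EReal) (x g z : H) : EReal :=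
  sInf { L | ∃ (t : ℕ → ℝ) (zs : ℕ → H),
      (∀ n, 0 < t n) ∧ Tendsto t atTop (nhds 0) ∧ WeakTendstoH zs z ∧
      L = Filter.liminf (fun n => secondQuotH j x g (t n) (zs n)) atTop }

/-- The indicator function of a set, with values in `EReal`. -/
noncomputable def indicatorE (K : Set H) : H → EReal := fun y => if y ∈ K then 0 else ⊤

/-- The tangent cone `T_K(x) = cl(ℝ⁺ (K - x))`. -/
def tangentConeH (K : Set H) (x : H) : Set H :=
  closure { z : H | ∃ c : ℝ, 0 ≤ c ∧ ∃ k ∈ K, z = c • (k - x) }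

/-- The second-order tangent set `T²_K(x, z)`. -/
def secondTangentH (K : Set H) (x z : H) : Set H :=
  { r : H | Tendsto (fun t : ℝ => Metric.infDist (x + t • z + (t ^ 2 / 2) • r) K / t ^ 2)
      (nhdsWithin 0 (Set.Ioi 0)) (nhds 0) }

/-- The proximal normal cone condition: `v ∈ N^P_K(x̄)`. -/
def ProxNormal (K : Set H) (xb v : H) : Prop :=
  ∃ l : ℝ, 0 ≤ l ∧ ∃ y : H, (xb ∈ K ∧ ∀ k ∈ K, ‖xb - y‖ ≤ ‖k - y‖) ∧ v = l • (y - xb)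

/-- `K` is `r`-prox-regular. -/
def ProxRegular (r : ℝ) (K : Set H) : Prop :=
  ∀ xb ∈ K, ∀ x ∈ K, ∀ v : H, ProxNormal K xb v →
    r * ⟪v, x - xb⟫ ≤ (1 / 2) * ‖v‖ * ‖x - xb‖ ^ 2

/-- Strong second-order epi-differentiability of `j` at `x` for `g`. -/
def StrongTwiceEpiH (j : H → EReal) (x g : H) : Prop :=
  ∀ z : H, ∀ t : ℕ → ℝ, (∀ n, 0 < t n) → Tendsto t atTop (nhds 0) →
    ∃ zs : ℕ → H, Tendsto zs atTop (nhds z) ∧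
      Tendsto (fun n => secondQuotH j x g (t n) (zs n)) atTop (nhds (QsubH j x g z))

/-
Since `g` is normal to `K` at `x`, every second-order quotient of the indicator is nonnegative,
so `Q ≥ 0`. Conversely, `0 ∈ T²_K(x,z)` yields points `x + tₙ zₙ ∈ K` with `zₙ - z = o(tₙ)`;
along them the quotient is `-2⟪g, (zₙ - z)/tₙ⟫` (as `⟪g, z⟫ = 0`), which tends to `0`.
-/

section

variable {E : Type*} [NormedAddCommGroup E] [InnerProductSpace ℝ E]

theorem WeakTendstoH.of_tendsto {zs : ℕ → E} {z : E} (h : Tendsto zs atTop (𝓝 z)) :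
    WeakTendstoH zs z :=
  fun _ => h.inner tendsto_const_nhds

theorem QsubH_le_of_tendsto {j : E → EReal} {x g z : E} {t : ℕ → ℝ} {zs : ℕ → E} {L : EReal}
    (ht : ∀ n, 0 < t n) (ht0 : Tendsto t atTop (𝓝 0)) (hzs : Tendsto zs atTop (𝓝 z))
    (hL : Tendsto (fun n => secondQuotH j x g (t n) (zs n)) atTop (𝓝 L)) :
    QsubH j x g z ≤ L :=
  sInf_le ⟨t, zs, ht, ht0, .of_tendsto hzs, hL.liminf_eq.symm⟩

theorem secondQuotH_indicatorE_nonneg {K : Set E} {x g : E} (hx : x ∈ K)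
    (hg : ∀ y ∈ K, ⟪g, y - x⟫ ≤ 0) {t : ℝ} (ht : 0 < t) (w : E) :
    0 ≤ secondQuotH (indicatorE K) x g t w := by
  have hc : (0 : ℝ) < 2 / t ^ 2 := by positivity
  unfold secondQuotH indicatorE
  rw [if_pos hx]
  by_cases hmem : x + t • w ∈ K
  · have hgw : t * ⟪g, w⟫ ≤ 0 := by
      simpa only [add_sub_cancel_left, real_inner_smul_right] using hg _ hmem
    rw [if_pos hmem, sub_zero, zero_sub, ← EReal.coe_neg, ← EReal.coe_mul]
    exact_mod_cast mul_nonneg hc.le (neg_nonneg.2 hgw)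
  · rw [if_neg hmem, sub_zero, EReal.top_sub_coe, EReal.mul_top_of_pos (mod_cast hc)]
    exact le_top

theorem QsubH_indicatorE_nonneg {K : Set E} {x g : E} (hx : x ∈ K)
    (hg : ∀ y ∈ K, ⟪g, y - x⟫ ≤ 0) (z : E) :
    0 ≤ QsubH (indicatorE K) x g z := by
  refine le_sInf ?_
  rintro L ⟨t, zs, ht, -, -, rfl⟩
  exact le_liminf_of_le (by isBoundedDefault)
    (Eventually.of_forall fun n => secondQuotH_indicatorE_nonneg hx hg (ht n) (zs n))

theorem secondQuotH_indicatorE_of_mem {K : Set E} {x g w : E} {t : ℝ} (hx : x ∈ K)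
    (hmem : x + t • w ∈ K) (ht : t ≠ 0) :
    secondQuotH (indicatorE K) x g t w = ((-(2 / t) * ⟪g, w⟫ : ℝ) : EReal) := by
  unfold secondQuotH indicatorE
  rw [if_pos hx, if_pos hmem, sub_zero, zero_sub, ← EReal.coe_neg, ← EReal.coe_mul]
  congr 1
  field_simp

theorem exists_seq_of_zero_mem_secondTangentH {K : Set E} {x z : E} (hx : x ∈ K)
    (hz : (0 : E) ∈ secondTangentH K x z) :
    ∃ (t : ℕ → ℝ) (zs : ℕ → E), (∀ n, 0 < t n) ∧ Tendsto t atTop (𝓝 0) ∧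
      (∀ n, x + t n • zs n ∈ K) ∧ Tendsto zs atTop (𝓝 z) ∧
      Tendsto (fun n => (t n)⁻¹ • (zs n - z)) atTop (𝓝 0) := by
  set t : ℕ → ℝ := fun n => 1 / (n + 1)
  have ht : ∀ n, 0 < t n := fun n => by positivity
  have ht0 : Tendsto t atTop (𝓝 0) := tendsto_one_div_add_atTop_nhds_zero_nat
  have hdist : Tendsto (fun n => Metric.infDist (x + t n • z) K / t n ^ 2) atTop (𝓝 0) := by
    have hz' : Tendsto (fun s : ℝ => Metric.infDist (x + s • z) K / s ^ 2) (𝓝[>] 0) (𝓝 0) := by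
      simpa only [secondTangentH, Set.mem_ofPred_eq, smul_zero, add_zero] using hz
    exact hz'.comp (tendsto_nhdsWithin_of_tendsto_nhds_of_eventually_within t ht0
      (Eventually.of_forall ht))
  -- an almost-nearest point of `K`, with slack `tₙ³ = o(tₙ²)`
  have hnear : ∀ n, ∃ k ∈ K, dist (x + t n • z) k < Metric.infDist (x + t n • z) K + t n ^ 3 :=
    fun n => (Metric.infDist_lt_iff ⟨x, hx⟩).1 (lt_add_of_pos_right _ (pow_pos (ht n) 3))
  choose k hkK hk using hnear
  set zs : ℕ → E := fun n => (t n)⁻¹ • (k n - x)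
  have hxk : ∀ n, x + t n • zs n = k n := fun n => by
    simp only [zs, smul_inv_smul₀ (ht n).ne', add_sub_cancel]
  have hrate : Tendsto (fun n => (t n)⁻¹ • (zs n - z)) atTop (𝓝 0) := by
    have hbound : ∀ n, ‖(t n)⁻¹ • (zs n - z)‖ ≤
        Metric.infDist (x + t n • z) K / t n ^ 2 + t n := fun n => by
      have htn := ht n
      have hkz : (t n)⁻¹ • (zs n - z) = (t n ^ 2)⁻¹ • (k n - (x + t n • z)) := by
        rw [← hxk n, add_sub_add_left_eq_sub, ← smul_sub, smul_smul]
        congr 1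
        field_simp
      rw [hkz, norm_smul, norm_inv, Real.norm_of_nonneg (by positivity), norm_sub_rev,
        ← dist_eq_norm, inv_mul_eq_div]
      calc dist (x + t n • z) (k n) / t n ^ 2
          ≤ (Metric.infDist (x + t n • z) K + t n ^ 3) / t n ^ 2 := by gcongr; exact (hk n).le
        _ = Metric.infDist (x + t n • z) K / t n ^ 2 + t n := by field_simp
    refine squeeze_zero_norm hbound ?_
    simpa using hdist.add ht0
  refine ⟨t, zs, ht, ht0, fun n => hxk n ▸ hkK n, ?_, hrate⟩
  have hdiff : Tendsto (fun n => t n • ((t n)⁻¹ • (zs n - z))) atTop (𝓝 0) := by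
    simpa using ht0.smul hrate
  refine tendsto_sub_nhds_zero_iff.1 (hdiff.congr fun n => ?_)
  rw [smul_inv_smul₀ (ht n).ne']

end

theorem Qsub_indicator_extendedPolyhedric_general (K : Set H) (x : H) (hx : x ∈ K) (g : H)
    (hg : ∀ y ∈ K, ⟪g, y - x⟫ ≤ 0) :
    ∀ z ∈ ({ z ∈ tangentConeH K x | (0 : H) ∈ secondTangentH K x z }) ∩
        { z : H | ⟪g, z⟫ = 0 },
      QsubH (indicatorE K) x g z = 0 := by
  rintro z ⟨⟨-, hz⟩, hgz⟩
  obtain ⟨t, zs, ht, ht0, hmem, hzs, hrate⟩ := exists_seq_of_zero_mem_secondTangentH hx hz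
  have hquot : ∀ n, secondQuotH (indicatorE K) x g (t n) (zs n) =
      ((-2 * ⟪g, (t n)⁻¹ • (zs n - z)⟫ : ℝ) : EReal) := fun n => by
    rw [secondQuotH_indicatorE_of_mem hx (hmem n) (ht n).ne', real_inner_smul_right,
      inner_sub_right, show ⟪g, z⟫ = 0 from hgz, sub_zero, div_eq_mul_inv]
    ring_nf
  have hlim : Tendsto (fun n => secondQuotH (indicatorE K) x g (t n) (zs n)) atTop (𝓝 0) := by
    simp_rw [hquot]
    simpa using EReal.tendsto_coe.2 ((tendsto_const_nhds (x := g)).inner hrate |>.const_mul (-2))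
  exact le_antisymm (QsubH_le_of_tendsto ht ht0 hzs hlim) (QsubH_indicatorE_nonneg hx hg z)

/-- for an extended polyhedric set, the second subderivative of the indicator
function vanishes on `{ z ∈ T_K(x) : 0 ∈ T²_K(x,z) } ∩ g^⊥`, which is therefore contained
in its domain. -/
theorem Qsub_indicator_extendedPolyhedric (K : Set H) (hKcl : IsClosed K)
    (hKconv : Convex ℝ K) (hKne : K.Nonempty) (x : H) (hx : x ∈ K) (g : H)
    (hg : ∀ y ∈ K, ⟪g, y - x⟫ ≤ 0)
    (hEP : tangentConeH K x ∩ { z : H | ⟪g, z⟫ = 0 } =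
      closure (({ z ∈ tangentConeH K x | (0 : H) ∈ secondTangentH K x z }) ∩
        { z : H | ⟪g, z⟫ = 0 })) :
    ∀ z ∈ ({ z ∈ tangentConeH K x | (0 : H) ∈ secondTangentH K x z }) ∩
        { z : H | ⟪g, z⟫ = 0 },
      QsubH (indicatorE K) x g z = 0 :=
  Qsub_indicator_extendedPolyhedric_general K x hx g hg
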